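/- For every N > 0 and every a ∈ ℝ, the Kullback–Leibler divergence from the Gaussian density q_a to the binary mixture q̃ satisfies ∫_ℝ q_a(z)·log(q_a(z)/q̃(z)) dz ≤ a²/N. -/

import Mathlib

open MeasureTheory

/-- Density of the Gaussian distribution with mean `0` and variance `N/2`. -/
noncomputable def q0 (N z : ℝ) : ℝ := (Real.sqrt (Real.pi * N))⁻¹ * Real.exp (-z ^ 2 / N)

/-- Density of the Gaussian distribution with mean `a` and variance `N/2`. -/
noncomputable def qa (N a z : ℝ) : ℝ := (Real.sqrt (Real.pi * N))⁻¹ * Real.exp (-(z - a) ^ 2 / N)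

/-- The binary mixture density `½ q_a + ½ q_{-a}`. -/
noncomputable def qmix (N a z : ℝ) : ℝ := (1 / 2) * qa N a z + (1 / 2) * qa N (-a) z

/-- The log-likelihood ratio `log (q̃(z)/q₀(z))`. -/
noncomputable def llr (N a z : ℝ) : ℝ := Real.log (qmix N a z / q0 N z)

/-!
Write `log (q_a/q̃) = log (q_a/q₀) - llr`. The first term is the affine function
`(2az - a²)/N`, whose mean under `q_a` is `a²/N`. The second is even, since
`llr z = log cosh (2az/N) - a²/N`, so its mean under `q_a` equals its mean under `q_{-a}`,
hence under `q̃`; there it is the KL divergence of `q̃` from `q₀`, nonnegative by Gibbs'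
inequality.
-/

open ProbabilityTheory Real
open scoped NNReal

section Gibbs

variable {α : Type*} [MeasurableSpace α] {μ : Measure α}

lemma sub_le_mul_log_div {p q : ℝ} (hp : 0 ≤ p) (hq : 0 < q) : p - q ≤ p * log (p / q) := by
  rcases hp.eq_or_lt with rfl | hp
  · simpa using hq.le
  · have h := one_sub_inv_le_log_of_pos (div_pos hp hq)
    rw [inv_div] at h
    calc p - q = p * (1 - q / p) := by field_simp
      _ ≤ p * log (p / q) := by gcongr

lemma integral_sub_le_integral_mul_log_div {p q : α → ℝ} (hp : 0 ≤ᵐ[μ] p)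
    (hq : ∀ᵐ x ∂μ, 0 < q x) (hpi : Integrable p μ) (hqi : Integrable q μ)
    (hpq : Integrable (fun x ↦ p x * log (p x / q x)) μ) :
    ∫ x, p x ∂μ - ∫ x, q x ∂μ ≤ ∫ x, p x * log (p x / q x) ∂μ := by
  rw [← integral_sub hpi hqi]
  refine integral_mono_ae (hpi.sub hqi) hpq ?_
  filter_upwards [hp, hq] with x hpx hqx using sub_le_mul_log_div hpx hqx

end Gibbs

lemma integrable_of_abs_le_add_mul_abs {μ : Measure ℝ} [IsFiniteMeasure μ]
    (hid : Integrable (fun x ↦ x) μ) {f : ℝ → ℝ} (hf : AEStronglyMeasurable f μ) {C D : ℝ}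
    (hbound : ∀ x, |f x| ≤ C + D * |x|) : Integrable f μ :=
  ((integrable_const C).add (hid.abs.const_mul D)).mono' hf (ae_of_all _ hbound)

lemma integrable_gaussianPDFReal_mul_iff {μ : ℝ} {v : ℝ≥0} (hv : v ≠ 0) {f : ℝ → ℝ} :
    Integrable (fun x ↦ gaussianPDFReal μ v x * f x) ↔ Integrable f (gaussianReal μ v) := by
  rw [gaussianReal_of_var_ne_zero _ hv, integrable_withDensity_iff_integrable_smul'
    (measurable_gaussianPDF μ v) (ae_of_all _ fun _ ↦ gaussianPDF_lt_top)]
  simp [toReal_gaussianPDF]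

lemma log_cosh_le_abs (x : ℝ) : log (cosh x) ≤ |x| := by
  have hcosh : cosh x ≤ exp |x| := by
    rw [cosh_eq]
    linarith [exp_le_exp.mpr (le_abs_self x), exp_le_exp.mpr (neg_le_abs x)]
  simpa using log_le_log (cosh_pos x) hcosh

section Densities

variable {N : ℝ}

lemma qa_eq_gaussianPDFReal (hN : 0 ≤ N) (a : ℝ) :
    qa N a = gaussianPDFReal a (N / 2).toNNReal := by
  ext z
  rw [gaussianPDFReal_def, qa, Real.coe_toNNReal _ (by positivity)]
  ring_nf

lemma qa_pos (hN : 0 < N) (a z : ℝ) : 0 < qa N a z := by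
  rw [qa_eq_gaussianPDFReal hN.le]
  exact gaussianPDFReal_pos _ _ _ (by simpa using hN)

lemma qmix_pos (hN : 0 < N) (a z : ℝ) : 0 < qmix N a z := by
  have := qa_pos hN a z
  have := qa_pos hN (-a) z
  unfold qmix
  positivity

lemma q0_eq_qa_zero (N : ℝ) : q0 N = qa N 0 := by
  ext z
  simp [q0, qa]

lemma q0_pos (hN : 0 < N) (z : ℝ) : 0 < q0 N z :=
  q0_eq_qa_zero N ▸ qa_pos hN 0 z

lemma integral_qa (hN : 0 < N) (a : ℝ) : ∫ z, qa N a z = 1 := by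
  rw [qa_eq_gaussianPDFReal hN.le]
  exact integral_gaussianPDFReal_eq_one a (by simpa using hN)

lemma integrable_qa (hN : 0 ≤ N) (a : ℝ) : Integrable (qa N a) := by
  rw [qa_eq_gaussianPDFReal hN]
  exact integrable_gaussianPDFReal _ _

lemma integrable_qmix (hN : 0 ≤ N) (a : ℝ) : Integrable (qmix N a) :=
  ((integrable_qa hN a).const_mul _).add ((integrable_qa hN (-a)).const_mul _)

lemma integral_qmix (hN : 0 < N) (a : ℝ) : ∫ z, qmix N a z = 1 := by
  unfold qmix
  rw [integral_add ((integrable_qa hN.le a).const_mul _)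
    ((integrable_qa hN.le (-a)).const_mul _), integral_const_mul, integral_const_mul,
    integral_qa hN, integral_qa hN]
  norm_num

lemma qa_div_q0 (hN : 0 < N) (a z : ℝ) : qa N a z / q0 N z = exp ((2 * a * z - a ^ 2) / N) := by
  rw [q0_eq_qa_zero, qa, qa, mul_div_mul_left _ _ (by positivity), ← exp_sub]
  congr 1
  field_simp
  ring

lemma llr_eq (hN : 0 < N) (a z : ℝ) : llr N a z = log (cosh (2 * a * z / N)) - a ^ 2 / N := by
  have hmix : qmix N a z / q0 N z = exp (-(a ^ 2 / N)) * cosh (2 * a * z / N) := by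
    rw [qmix, add_div, mul_div_assoc, mul_div_assoc, qa_div_q0 hN, qa_div_q0 hN, cosh_eq,
      show (2 * a * z - a ^ 2) / N = -(a ^ 2 / N) + 2 * a * z / N by ring,
      show (2 * -a * z - (-a) ^ 2) / N = -(a ^ 2 / N) + -(2 * a * z / N) by ring, exp_add, exp_add]
    ring
  rw [_root_.llr, hmix, log_mul (exp_ne_zero _) (cosh_pos _).ne', log_exp]
  ring

lemma llr_neg (hN : 0 < N) (a z : ℝ) : llr N a (-z) = llr N a z := by
  simp only [llr_eq hN, mul_neg, neg_div, cosh_neg]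

lemma abs_llr_le (hN : 0 < N) (a z : ℝ) : |llr N a z| ≤ a ^ 2 / N + |2 * a / N| * |z| := by
  have hlow : 0 ≤ log (cosh (2 * a * z / N)) := log_nonneg (one_le_cosh _)
  have hup : log (cosh (2 * a * z / N)) ≤ |2 * a / N| * |z| := by
    simpa [← abs_mul, div_mul_eq_mul_div] using log_cosh_le_abs (2 * a * z / N)
  have : 0 ≤ a ^ 2 / N := by positivity
  rw [llr_eq hN, abs_le]
  constructor <;> linarith

lemma measurable_llr (N a : ℝ) : Measurable (llr N a) := by
  unfold _root_.llr qmix qa q0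
  fun_prop

lemma log_qa_div_qmix (hN : 0 < N) (a z : ℝ) :
    log (qa N a z / qmix N a z) = (2 * a * z - a ^ 2) / N - llr N a z := by
  have hq0 := (q0_pos hN z).ne'
  rw [_root_.llr, log_div (qa_pos hN a z).ne' (qmix_pos hN a z).ne',
    log_div (qmix_pos hN a z).ne' hq0, ← log_exp ((2 * a * z - a ^ 2) / N), ← qa_div_q0 hN,
    log_div (qa_pos hN a z).ne' hq0]
  ring

lemma integral_qa_mul (hN : 0 < N) (a : ℝ) (f : ℝ → ℝ) :
    ∫ z, qa N a z * f z = ∫ z, f z ∂gaussianReal a (N / 2).toNNReal := by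
  rw [qa_eq_gaussianPDFReal hN.le, integral_gaussianReal_eq_integral_smul (by simpa using hN)]
  rfl

lemma integrable_llr_gaussianReal (hN : 0 < N) (a b : ℝ) :
    Integrable (llr N a) (gaussianReal b (N / 2).toNNReal) :=
  integrable_of_abs_le_add_mul_abs ((memLp_id_gaussianReal 1).integrable le_rfl)
    (measurable_llr N a).aestronglyMeasurable (abs_llr_le hN a)

lemma integrable_qa_mul_llr (hN : 0 < N) (a b : ℝ) :
    Integrable (fun z ↦ qa N b z * llr N a z) := by
  rw [qa_eq_gaussianPDFReal hN.le, integrable_gaussianPDFReal_mul_iff (by simpa using hN)]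
  exact integrable_llr_gaussianReal hN a b

lemma integral_llr_gaussianReal_neg (hN : 0 < N) (a b : ℝ) :
    ∫ z, llr N a z ∂gaussianReal (-b) (N / 2).toNNReal
      = ∫ z, llr N a z ∂gaussianReal b (N / 2).toNNReal := by
  rw [← gaussianReal_map_neg, integral_map measurable_neg.aemeasurable
    (measurable_llr N a).aestronglyMeasurable]
  simp only [llr_neg hN]

lemma integrable_qmix_mul_llr (hN : 0 < N) (a : ℝ) :
    Integrable (fun z ↦ qmix N a z * llr N a z) := by
  simp only [qmix, add_mul, mul_assoc]
  exact ((integrable_qa_mul_llr hN a a).const_mul _).add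
    ((integrable_qa_mul_llr hN a (-a)).const_mul _)

lemma integral_qmix_mul_llr (hN : 0 < N) (a : ℝ) :
    ∫ z, qmix N a z * llr N a z = ∫ z, llr N a z ∂gaussianReal a (N / 2).toNNReal := by
  simp only [qmix, add_mul, mul_assoc]
  rw [integral_add ((integrable_qa_mul_llr hN a a).const_mul _)
    ((integrable_qa_mul_llr hN a (-a)).const_mul _), integral_const_mul, integral_const_mul,
    integral_qa_mul hN, integral_qa_mul hN, integral_llr_gaussianReal_neg hN]
  ring

lemma integral_llr_gaussianReal_nonneg (hN : 0 < N) (a : ℝ) :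
    0 ≤ ∫ z, llr N a z ∂gaussianReal a (N / 2).toNNReal := by
  have hq0 : Integrable (q0 N) := q0_eq_qa_zero N ▸ integrable_qa hN.le 0
  have hq0_one : ∫ z, q0 N z = 1 := q0_eq_qa_zero N ▸ integral_qa hN 0
  have hgibbs := integral_sub_le_integral_mul_log_div
    (ae_of_all _ fun z ↦ (qmix_pos hN a z).le) (ae_of_all _ (q0_pos hN))
    (integrable_qmix hN.le a) hq0 (integrable_qmix_mul_llr hN a)
  rw [integral_qmix hN, hq0_one, sub_self] at hgibbs
  rwa [← integral_qmix_mul_llr hN]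

end Densities

/-- The KL divergence from the Gaussian `q_a` to the binary mixture `q̃` is at most `a²/N`. -/
theorem kl_qa_qmix_le (N a : ℝ) (hN : 0 < N) :
    (∫ z : ℝ, qa N a z * Real.log (qa N a z / qmix N a z)) ≤ a ^ 2 / N := by
  set G := gaussianReal a (N / 2).toNNReal
  have hid : Integrable (fun z ↦ z) G := (memLp_id_gaussianReal 1).integrable le_rfl
  have hlinear : Integrable (fun z ↦ (2 * a * z - a ^ 2) / N) G :=
    ((hid.const_mul _).sub (integrable_const _)).div_const _
  have hmean : ∫ z, (2 * a * z - a ^ 2) / N ∂G = a ^ 2 / N := by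
    rw [integral_div, integral_sub (hid.const_mul _) (integrable_const _), integral_const_mul,
      integral_id_gaussianReal, integral_const]
    simp only [probReal_univ, smul_eq_mul, one_mul]
    ring
  calc ∫ z, qa N a z * log (qa N a z / qmix N a z)
      = ∫ z, (2 * a * z - a ^ 2) / N - llr N a z ∂G := by
        simp only [log_qa_div_qmix hN, integral_qa_mul hN, G]
    _ = a ^ 2 / N - ∫ z, llr N a z ∂G := by
        rw [integral_sub hlinear (integrable_llr_gaussianReal hN a a), hmean]
    _ ≤ a ^ 2 / N := sub_le_self _ (integral_llr_gaussianReal_nonneg hN a)
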